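/- As N → ∞, ∑_{n=1}^{N²} τ_N(n)² = (12/π²)·N²·log N + O(N²), where τ_N(n) = #{(a,b) ∈ ℤ² : ab = n, 1 ≤ a,b ≤ N}. -/

import Mathlib

open Finset Filter

/-- The restricted divisor function `τ_N(n) = #{(a,b) : ab = n, 1 ≤ a,b ≤ N}`. -/
def tauN (N n : ℕ) : ℕ :=
  ((Finset.Icc 1 N ×ˢ Finset.Icc 1 N).filter fun p => p.1 * p.2 = n).card

/-!
The sum counts the quadruples in `[1, N]⁴` with `a * b = c * d`, i.e. the multiplicative energy
of `[1, N]`. Writing `(a, c) = g • (s, t)` with `s, t` coprime, the equation forces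
`(d, b) = h • (s, t)`, and `g, h` range independently over `[1, N / max s t]`; summing over the
coprime pairs, grouped by `m = max s t`, gives `2 ∑_{m ≤ N} φ(m) ⌊N / m⌋² - N²`. Dropping the floors
costs `O(N²)`, and `∑_{m ≤ N} φ(m) / m² = (6 / π²) log N + O(1)` follows from `φ = μ * id`, the
harmonic sum `∑_{e ≤ x} 1 / e = log x + O(1)` and `∑ μ(d) / d² = 1 / ζ(2) = 6 / π²`.
-/

open Asymptotics Real ArithmeticFunction
open scoped Combinatorics.Additive ArithmeticFunction.Moebius Topology

lemma sum_sq_tauN_eq_mulEnergy (N : ℕ) :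
    ∑ n ∈ Icc 1 (N ^ 2), tauN N n ^ 2 = Eₘ[Icc 1 N] := by
  rw [mulEnergy_eq_sum_sq']
  refine (sum_subset (fun n hn => ?_) fun n _ hn => ?_).symm
  · obtain ⟨a, ha, b, hb, rfl⟩ := mem_mul.1 hn
    simp only [mem_Icc] at ha hb ⊢
    constructor <;> nlinarith
  · rw [tauN, sq_eq_zero_iff, card_eq_zero, filter_eq_empty_iff]
    rintro p hp rfl
    exact hn (mul_mem_mul (mem_product.1 hp).1 (mem_product.1 hp).2)

lemma Nat.Coprime.exists_eq_mul_of_mul_eq_mul {s t x y : ℕ} (hs : 0 < s) (hst : s.Coprime t)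
    (h : t * x = s * y) : ∃ k, x = k * s ∧ y = k * t := by
  obtain ⟨k, rfl⟩ := hst.dvd_of_dvd_mul_left ⟨y, h⟩
  refine ⟨k, mul_comm s k, Nat.eq_of_mul_eq_mul_left hs ?_⟩
  rw [← h]
  ring

lemma card_filter_mul_eq_mul {s t : ℕ} (hs : 0 < s) (ht : 0 < t) (hst : s.Coprime t) (N : ℕ) :
    #{p ∈ Icc 1 N ×ˢ Icc 1 N | t * p.1 = s * p.2} = N / max s t := by
  have hinj : Function.Injective fun k : ℕ => (k * s, k * t) :=
    fun k l hkl => Nat.eq_of_mul_eq_mul_right hs (Prod.ext_iff.1 hkl).1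
  suffices {p ∈ Icc 1 N ×ˢ Icc 1 N | t * p.1 = s * p.2} =
      (Icc 1 (N / max s t)).map ⟨_, hinj⟩ by
    rw [this, card_map, Nat.card_Icc, Nat.add_sub_cancel]
  ext ⟨x, y⟩
  simp only [mem_filter, mem_product, mem_Icc, Finset.mem_map, Function.Embedding.coeFn_mk,
    Prod.mk.injEq, Nat.le_div_iff_mul_le (lt_max_of_lt_left hs), ← Nat.mul_max_mul_left,
    max_le_iff]
  constructor
  · rintro ⟨⟨⟨hx, hxN⟩, hy, hyN⟩, h⟩
    obtain ⟨k, rfl, rfl⟩ := hst.exists_eq_mul_of_mul_eq_mul hs h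
    exact ⟨k, ⟨Nat.pos_of_mul_pos_right hx, hxN, hyN⟩, rfl, rfl⟩
  · rintro ⟨k, ⟨hk, hks, hkt⟩, rfl, rfl⟩
    exact ⟨⟨⟨Nat.mul_pos hk hs, hks⟩, Nat.mul_pos hk ht, hkt⟩, by ring⟩

def primitiveVector (p : ℕ × ℕ) : ℕ × ℕ :=
  (p.1 / p.1.gcd p.2, p.2 / p.1.gcd p.2)

lemma primitiveVector_eq_iff {a b s t : ℕ} (ha : 0 < a) (hst : s.Coprime t) :
    primitiveVector (a, b) = (s, t) ↔ t * a = s * b := by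
  constructor
  · intro h
    simp only [primitiveVector, Prod.mk.injEq] at h
    rw [← h.1, ← h.2, Nat.div_mul_right_comm (Nat.gcd_dvd_right a b),
      Nat.div_mul_right_comm (Nat.gcd_dvd_left a b), mul_comm]
  · intro h
    have hs : 0 < s := by
      refine Nat.pos_of_ne_zero fun hs => ?_
      subst hs
      rw [Nat.coprime_zero_left] at hst
      subst hst
      omega
    obtain ⟨k, rfl, rfl⟩ := hst.exists_eq_mul_of_mul_eq_mul hs h
    have hk : 0 < k := Nat.pos_of_mul_pos_right ha
    simp only [primitiveVector, mul_comm k, Nat.gcd_mul_right, hst, one_mul,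
      Nat.mul_div_cancel _ hk]

def coprimePairs (N : ℕ) : Finset (ℕ × ℕ) :=
  {q ∈ Icc 1 N ×ˢ Icc 1 N | q.1.Coprime q.2}

lemma primitiveVector_mem_coprimePairs {N : ℕ} {p : ℕ × ℕ} (hp : p ∈ Icc 1 N ×ˢ Icc 1 N) :
    primitiveVector p ∈ coprimePairs N := by
  simp only [mem_product, mem_Icc] at hp
  have hg : 0 < p.1.gcd p.2 := Nat.gcd_pos_of_pos_left _ hp.1.1
  simp only [coprimePairs, primitiveVector, mem_filter, mem_product, mem_Icc]
  refine ⟨⟨⟨Nat.div_pos (Nat.gcd_le_left _ hp.1.1) hg, (Nat.div_le_self _ _).trans hp.1.2⟩,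
    Nat.div_pos (Nat.gcd_le_right _ hp.2.1) hg, (Nat.div_le_self _ _).trans hp.2.2⟩,
    Nat.coprime_div_gcd_div_gcd hg⟩

lemma mul_eq_mul_iff_primitiveVector {a₁ a₂ b₁ b₂ : ℕ} (ha : 0 < a₁) :
    a₁ * b₁ = a₂ * b₂ ↔
      (primitiveVector (a₁, a₂)).1 * b₁ = (primitiveVector (a₁, a₂)).2 * b₂ := by
  have h₁ := Nat.mul_div_cancel' (Nat.gcd_dvd_left a₁ a₂)
  have h₂ := Nat.mul_div_cancel' (Nat.gcd_dvd_right a₁ a₂)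
  simp only [primitiveVector]
  conv_rhs => rw [← Nat.mul_left_cancel_iff (Nat.gcd_pos_of_pos_left a₂ ha), ← mul_assoc,
    ← mul_assoc, h₁, h₂]

lemma mulEnergy_Icc_eq_sum_coprimePairs (N : ℕ) :
    Eₘ[Icc 1 N] = ∑ q ∈ coprimePairs N, (N / max q.1 q.2) ^ 2 := by
  set box := Icc 1 N ×ˢ Icc 1 N
  have hbox {a : ℕ × ℕ} (ha : a ∈ box) : 0 < a.1 ∧ 0 < a.2 := by
    simp only [box, mem_product, mem_Icc] at ha
    omega
  have fiber_b (a) (ha : a ∈ box) : #{b ∈ box | a.1 * b.1 = a.2 * b.2} =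
      N / max (primitiveVector a).1 (primitiveVector a).2 := by
    have hq := mem_filter.1 (primitiveVector_mem_coprimePairs ha)
    have hq' := hbox hq.1
    simp_rw [mul_eq_mul_iff_primitiveVector (hbox ha).1]
    rw [max_comm]
    exact card_filter_mul_eq_mul hq'.2 hq'.1 hq.2.symm N
  have fiber_a (q) (hq : q ∈ coprimePairs N) :
      #{a ∈ box | primitiveVector a = q} = N / max q.1 q.2 := by
    have hq := mem_filter.1 hq
    rw [← card_filter_mul_eq_mul (hbox hq.1).1 (hbox hq.1).2 hq.2 N]
    refine congrArg card (filter_congr fun a ha => ?_)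
    exact primitiveVector_eq_iff (hbox ha).1 hq.2
  calc Eₘ[Icc 1 N] = ∑ a ∈ box, #{b ∈ box | a.1 * b.1 = a.2 * b.2} := by
        rw [mulEnergy, card_filter, sum_product]
        simp only [card_filter]
        rfl
    _ = ∑ a ∈ box, N / max (primitiveVector a).1 (primitiveVector a).2 := sum_congr rfl fiber_b
    _ = ∑ q ∈ coprimePairs N, ∑ a ∈ box with primitiveVector a = q,
          N / max (primitiveVector a).1 (primitiveVector a).2 :=
        (sum_fiberwise_of_maps_to (fun _ => primitiveVector_mem_coprimePairs) _).symm
    _ = ∑ q ∈ coprimePairs N, (N / max q.1 q.2) ^ 2 := by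
        refine sum_congr rfl fun q hq => ?_
        rw [sum_congr rfl fun a ha => by rw [(mem_filter.1 ha).2], sum_const, fiber_a q hq,
          smul_eq_mul, sq]

lemma sum_coprimePairs_le_max {M : Type*} [AddCommMonoid M] (N : ℕ) (f : ℕ → M) :
    ∑ q ∈ coprimePairs N with q.1 ≤ q.2, f (max q.1 q.2) = ∑ m ∈ Icc 1 N, m.totient • f m := by
  rw [← sum_fiberwise_of_maps_to (g := Prod.snd) (t := Icc 1 N)]
  · refine sum_congr rfl fun m hm => ?_
    have h_card : #{q ∈ coprimePairs N | q.1 ≤ q.2 ∧ q.2 = m} = m.totient := by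
      rw [← Nat.filter_coprime_Ico_eq_totient m 1, add_comm, Ico_add_one_right_eq_Icc]
      refine card_nbij' Prod.fst (fun s => (s, m)) ?_ ?_ ?_ fun _ _ => rfl
      all_goals simp only [coprimePairs, Set.MapsTo, Set.LeftInvOn, mem_coe, mem_filter,
        mem_product, mem_Icc] at hm ⊢
      · rintro ⟨s, t⟩ ⟨⟨⟨hs, -⟩, hst⟩, hle, rfl⟩
        exact ⟨⟨hs.1, hle⟩, hst.symm⟩
      · rintro s ⟨hs, hsm⟩
        exact ⟨⟨⟨⟨hs.1, hs.2.trans hm.2⟩, hm⟩, hsm.symm⟩, hs.2, trivial⟩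
      · rintro ⟨s, t⟩ ⟨-, -, rfl⟩
        rfl
    rw [filter_filter, sum_congr rfl fun q hq => ?_, sum_const, h_card]
    obtain ⟨-, hle, rfl⟩ := mem_filter.1 hq
    rw [max_eq_right hle]
  · intro q hq
    simp only [coprimePairs, mem_filter, mem_product] at hq
    exact hq.1.1.2

lemma sum_coprimePairs_max_add {M : Type*} [AddCommMonoid M] {N : ℕ} (hN : 1 ≤ N) (f : ℕ → M) :
    ∑ q ∈ coprimePairs N, f (max q.1 q.2) + f 1 = 2 • ∑ m ∈ Icc 1 N, m.totient • f m := by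
  set lower := {q ∈ coprimePairs N | q.1 ≤ q.2}
  set upper := {q ∈ coprimePairs N | q.2 ≤ q.1}
  have h_swap : ∑ q ∈ upper, f (max q.1 q.2) = ∑ q ∈ lower, f (max q.1 q.2) := by
    refine sum_nbij' Prod.swap Prod.swap ?_ ?_ (fun _ _ => rfl) (fun _ _ => rfl)
      fun q _ => by rw [Prod.fst_swap, Prod.snd_swap, max_comm]
    all_goals
      rintro ⟨s, t⟩ hq
      simp only [lower, upper, coprimePairs, mem_filter, mem_product] at hq ⊢
      exact ⟨⟨⟨hq.1.1.2, hq.1.1.1⟩, hq.1.2.symm⟩, hq.2⟩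
  have h_union : lower ∪ upper = coprimePairs N := by
    ext q
    simp only [lower, upper, mem_union, mem_filter, ← and_or_left, and_iff_left_iff_imp]
    exact fun _ => le_total _ _
  have h_inter : lower ∩ upper = {(1, 1)} := by
    ext ⟨s, t⟩
    simp only [lower, upper, coprimePairs, mem_inter, mem_filter, mem_product, mem_Icc,
      mem_singleton, Prod.mk.injEq]
    constructor
    · rintro ⟨⟨⟨-, hst⟩, hle⟩, -, hge⟩
      obtain rfl := le_antisymm hle hge
      exact ⟨(Nat.coprime_self s).1 hst, (Nat.coprime_self s).1 hst⟩
    · rintro ⟨rfl, rfl⟩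
      simp [hN]
  have h_diag : ∑ q ∈ lower ∩ upper, f (max q.1 q.2) = f 1 := by
    rw [h_inter, sum_singleton, max_self]
  rw [← h_diag, ← h_union, sum_union_inter, h_swap, sum_coprimePairs_le_max, two_nsmul]

lemma hasSum_moebius_div_sq : HasSum (fun n : ℕ => (μ n : ℝ) / n ^ 2) (6 / π ^ 2) := by
  have hs : 1 < (2 : ℂ).re := by norm_num
  have hL : LSeries (fun n => (μ n : ℂ)) 2 = 6 / π ^ 2 := by
    have h := LSeries_one_mul_Lseries_moebius hs
    rw [LSeries_one_eq_riemannZeta hs, riemannZeta_two] at h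
    have hπ : (π : ℂ) ≠ 0 := Complex.ofReal_ne_zero.2 pi_ne_zero
    field_simp at h ⊢
    linear_combination h
  have h : HasSum (LSeries.term (fun n => (μ n : ℂ)) 2) (6 / π ^ 2) :=
    hL ▸ (LSeriesSummable_moebius_iff.2 hs).LSeriesHasSum
  rw [← Complex.hasSum_ofReal]
  convert h using 1
  · ext n
    rcases eq_or_ne n 0 with rfl | hn
    · simp
    · rw [LSeries.term_of_ne_zero hn]
      push_cast
      norm_num
  · push_cast
    rfl

lemma abs_moebius_div_sq_le (d : ℕ) : |(μ d : ℝ) / d ^ 2| ≤ ((d : ℝ) ^ 2)⁻¹ := by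
  rw [abs_div, abs_of_nonneg (sq_nonneg (d : ℝ)), div_eq_mul_inv]
  exact mul_le_of_le_one_left (inv_nonneg.2 (sq_nonneg _)) (mod_cast abs_moebius_le_one)

lemma abs_sum_moebius_div_sq_sub_le {N : ℕ} (hN : N ≠ 0) :
    |∑ d ∈ Icc 1 N, (μ d : ℝ) / d ^ 2 - 6 / π ^ 2| ≤ (N : ℝ)⁻¹ := by
  have h_tendsto : Tendsto (fun M => ∑ d ∈ Icc 1 M, (μ d : ℝ) / d ^ 2) atTop (𝓝 (6 / π ^ 2)) := by
    refine (hasSum_moebius_div_sq.tendsto_sum_nat.comp (tendsto_add_atTop_nat 1)).congr fun M => ?_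
    rw [Function.comp_apply, Nat.range_succ_eq_Icc_zero,
      ← insert_Icc_add_one_left_eq_Icc M.zero_le, sum_insert (by simp)]
    simp
  have h_partial (M : ℕ) (hM : N ≤ M) :
      |∑ d ∈ Icc 1 N, (μ d : ℝ) / d ^ 2 - ∑ d ∈ Icc 1 M, (μ d : ℝ) / d ^ 2| ≤ (N : ℝ)⁻¹ := by
    calc _ = |∑ d ∈ Ioc N M, (μ d : ℝ) / d ^ 2| := by
          rw [show Icc 1 M = Ioc 0 M from rfl, ← sum_Ioc_consecutive _ N.zero_le hM,
            show Ioc 0 N = Icc 1 N from rfl, sub_add_cancel_left, abs_neg]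
      _ ≤ ∑ d ∈ Ioc N M, ((d : ℝ) ^ 2)⁻¹ :=
          (abs_sum_le_sum_abs _ _).trans (sum_le_sum fun d _ => abs_moebius_div_sq_le d)
      _ ≤ (N : ℝ)⁻¹ - (M : ℝ)⁻¹ := sum_Ioc_inv_sq_le_sub hN hM
      _ ≤ (N : ℝ)⁻¹ := sub_le_self _ (inv_nonneg.2 M.cast_nonneg)
  refine le_of_tendsto (tendsto_const_nhds.sub h_tendsto).abs ?_
  filter_upwards [eventually_ge_atTop N] with M hM using h_partial M hM

lemma summable_log_div_sq : Summable fun n : ℕ => Real.log n / n ^ 2 := by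
  refine summable_of_isBigO_nat (Real.summable_nat_rpow.2 (by norm_num : (-3 / 2 : ℝ) < -1)) ?_
  have h_log : (fun n : ℕ => Real.log n) =O[atTop] fun n : ℕ => (n : ℝ) ^ (1 / 2 : ℝ) :=
    (isLittleO_log_rpow_atTop (by norm_num)).isBigO.comp_tendsto tendsto_natCast_atTop_atTop
  refine (h_log.mul (isBigO_refl (fun n : ℕ => ((n : ℝ) ^ 2)⁻¹) atTop)).congr'
    (Eventually.of_forall fun n => (div_eq_mul_inv _ _).symm) ?_
  filter_upwards [eventually_gt_atTop 0] with n hn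
  have hn : (0 : ℝ) < n := by exact_mod_cast hn
  rw [← Real.rpow_natCast, ← Real.rpow_neg hn.le, ← Real.rpow_add hn]
  norm_num

lemma abs_harmonic_floor_sub_log_le {y : ℝ} (hy : 1 ≤ y) :
    |(harmonic ⌊y⌋₊ : ℝ) - Real.log y| ≤ 1 := by
  rw [abs_le]
  constructor
  · linarith [log_le_harmonic_floor y (by linarith)]
  · linarith [harmonic_floor_le_one_add_log y hy]

lemma sum_totient_div_sq_eq_sum_moebius_mul_harmonic (N : ℕ) :
    ∑ m ∈ Icc 1 N, (m.totient : ℝ) / m ^ 2 =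
      ∑ d ∈ Icc 1 N, (μ d : ℝ) / d ^ 2 * harmonic (N / d) := by
  let f : ArithmeticFunction ℝ := ⟨fun d => (μ d : ℝ) / d ^ 2, by simp⟩
  let g : ArithmeticFunction ℝ := ⟨fun e => (e : ℝ)⁻¹, by simp⟩
  have h_totient (m : ℕ) (hm : 0 < m) : (f * g) m = m.totient / m ^ 2 := by
    have h := (sum_eq_iff_sum_mul_moebius_eq (R := ℝ) (f := fun n => n.totient)
      (g := fun n => n)).1 (fun n _ => mod_cast Nat.sum_totient n) m hm
    rw [← h, mul_apply, sum_div]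
    refine sum_congr rfl fun x hx => ?_
    obtain ⟨hx, -⟩ := Nat.mem_divisorsAntidiagonal.1 hx
    have h₁ : (x.1 : ℝ) ≠ 0 := by exact_mod_cast Nat.ne_zero_of_mul_ne_zero_left (hx ▸ hm.ne')
    have h₂ : (x.2 : ℝ) ≠ 0 := by exact_mod_cast Nat.ne_zero_of_mul_ne_zero_right (hx ▸ hm.ne')
    simp only [f, g, coe_mk, ← hx, Nat.cast_mul]
    field_simp
  calc ∑ m ∈ Icc 1 N, (m.totient : ℝ) / m ^ 2 = ∑ m ∈ Ioc 0 N, (f * g) m :=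
        sum_congr rfl fun m hm => (h_totient m (mem_Ioc.1 hm).1).symm
    _ = ∑ d ∈ Ioc 0 N, f d * ∑ e ∈ Ioc 0 (N / d), g e := sum_Ioc_mul_eq_sum_sum f g N
    _ = ∑ d ∈ Icc 1 N, (μ d : ℝ) / d ^ 2 * harmonic (N / d) := by
        simp only [coe_mk, harmonic_eq_sum_Icc, Rat.cast_sum, Rat.cast_inv, Rat.cast_natCast, f, g]
        rfl

lemma abs_sum_moebius_div_sq_mul_harmonic_sub_log_le (N : ℕ) :
    |∑ d ∈ Icc 1 N, (μ d : ℝ) / d ^ 2 * (harmonic ⌊(N : ℝ) / d⌋₊ - Real.log ((N : ℝ) / d))| ≤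
      ∑' d : ℕ, ((d : ℝ) ^ 2)⁻¹ := by
  refine (abs_sum_le_sum_abs _ _).trans <| (sum_le_sum fun d hd => ?_).trans <|
    Summable.sum_le_tsum _ (fun _ _ => by positivity) (Real.summable_nat_pow_inv.2 one_lt_two)
  have hy : 1 ≤ (N : ℝ) / d := by
    obtain ⟨hd, hdN⟩ := mem_Icc.1 hd
    rw [one_le_div (by positivity)]
    exact_mod_cast hdN
  rw [abs_mul]
  exact (mul_le_of_le_one_right (abs_nonneg _) (abs_harmonic_floor_sub_log_le hy)).trans
    (abs_moebius_div_sq_le d)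

lemma abs_sum_totient_div_sq_sub_log_le {N : ℕ} (hN : N ≠ 0) :
    |∑ m ∈ Icc 1 N, (m.totient : ℝ) / m ^ 2 - 6 / π ^ 2 * Real.log N| ≤
      (∑' d : ℕ, ((d : ℝ) ^ 2)⁻¹) + 1 + ∑' d : ℕ, Real.log d / d ^ 2 := by
  set a : ℕ → ℝ := fun d => (μ d : ℝ) / d ^ 2
  have h_log_div (d : ℕ) (hd : d ∈ Icc 1 N) : Real.log ((N : ℝ) / d) = Real.log N - Real.log d :=
    Real.log_div (by exact_mod_cast hN) (by have := (mem_Icc.1 hd).1; positivity)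
  have h_decomp : ∑ m ∈ Icc 1 N, (m.totient : ℝ) / m ^ 2 - 6 / π ^ 2 * Real.log N =
      ∑ d ∈ Icc 1 N, a d * (harmonic ⌊(N : ℝ) / d⌋₊ - Real.log ((N : ℝ) / d)) +
        Real.log N * (∑ d ∈ Icc 1 N, a d - 6 / π ^ 2) - ∑ d ∈ Icc 1 N, a d * Real.log d := by
    have h_term (d : ℕ) (hd : d ∈ Icc 1 N) : (μ d : ℝ) / d ^ 2 * harmonic (N / d) =
        a d * (harmonic ⌊(N : ℝ) / d⌋₊ - Real.log ((N : ℝ) / d)) + Real.log N * a d -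
          a d * Real.log d := by
      rw [Nat.floor_div_eq_div, h_log_div d hd]
      ring
    rw [sum_totient_div_sq_eq_sum_moebius_mul_harmonic, sum_congr rfl h_term, sum_sub_distrib,
      sum_add_distrib, ← mul_sum]
    ring
  have h_tail : |Real.log N * (∑ d ∈ Icc 1 N, a d - 6 / π ^ 2)| ≤ 1 := by
    have hN' : (0 : ℝ) < N := by positivity
    rw [abs_mul, abs_of_nonneg (Real.log_natCast_nonneg N)]
    calc Real.log N * |∑ d ∈ Icc 1 N, a d - 6 / π ^ 2| ≤ N * (N : ℝ)⁻¹ :=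
          mul_le_mul ((Real.log_le_sub_one_of_pos hN').trans (by linarith))
            (abs_sum_moebius_div_sq_sub_le hN) (abs_nonneg _) hN'.le
      _ = 1 := mul_inv_cancel₀ hN'.ne'
  have h_log : |∑ d ∈ Icc 1 N, a d * Real.log d| ≤ ∑' d : ℕ, Real.log d / d ^ 2 := by
    refine (abs_sum_le_sum_abs _ _).trans <| (sum_le_sum fun d _ => ?_).trans <|
      Summable.sum_le_tsum _ (fun d _ => by positivity) summable_log_div_sq
    rw [abs_mul, abs_of_nonneg (Real.log_natCast_nonneg d), div_eq_mul_inv, mul_comm]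
    exact mul_le_mul_of_nonneg_left (abs_moebius_div_sq_le d) (Real.log_natCast_nonneg d)
  rw [h_decomp, sub_eq_add_neg]
  refine (abs_add_three _ _ _).trans ?_
  rw [abs_neg]
  exact add_le_add (add_le_add (abs_sum_moebius_div_sq_mul_harmonic_sub_log_le N) h_tail) h_log

lemma abs_floor_sq_sub_sq_le {x : ℝ} (hx : 0 ≤ x) : |(⌊x⌋₊ : ℝ) ^ 2 - x ^ 2| ≤ 2 * x := by
  have h₁ := Nat.floor_le hx
  have h₂ := Nat.lt_floor_add_one x
  rw [abs_le]
  constructor <;> nlinarith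

lemma abs_sum_totient_mul_div_sq_sub_le (N : ℕ) :
    |∑ m ∈ Icc 1 N, (m.totient : ℝ) * ((N / m : ℕ) : ℝ) ^ 2 -
        (N : ℝ) ^ 2 * ∑ m ∈ Icc 1 N, (m.totient : ℝ) / m ^ 2| ≤ 2 * N ^ 2 := by
  rw [mul_sum, ← sum_sub_distrib]
  refine (abs_sum_le_sum_abs _ _).trans <|
    (sum_le_sum fun m hm => ?_).trans_eq (b := ∑ _m ∈ Icc 1 N, 2 * (N : ℝ)) ?_
  · have hm : (0 : ℝ) < m := by have := (mem_Icc.1 hm).1; positivity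
    calc |(m.totient : ℝ) * ((N / m : ℕ) : ℝ) ^ 2 - (N : ℝ) ^ 2 * ((m.totient : ℝ) / m ^ 2)|
        = |(m.totient : ℝ) * ((⌊(N : ℝ) / m⌋₊ : ℝ) ^ 2 - ((N : ℝ) / m) ^ 2)| := by
          rw [Nat.floor_div_eq_div]
          congr 1
          field_simp
      _ = m.totient * |(⌊(N : ℝ) / m⌋₊ : ℝ) ^ 2 - ((N : ℝ) / m) ^ 2| := by
          rw [abs_mul, Nat.abs_cast]
      _ ≤ m * (2 * ((N : ℝ) / m)) :=
          mul_le_mul (mod_cast m.totient_le) (abs_floor_sq_sub_sq_le (by positivity))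
            (abs_nonneg _) hm.le
      _ = 2 * N := by field_simp
  · rw [sum_const, Nat.card_Icc, nsmul_eq_mul]
    push_cast
    ring

lemma sum_sq_tauN_add_sq {N : ℕ} (hN : 1 ≤ N) :
    ∑ n ∈ Icc 1 (N ^ 2), tauN N n ^ 2 + N ^ 2 =
      2 * ∑ m ∈ Icc 1 N, m.totient * (N / m) ^ 2 := by
  rw [sum_sq_tauN_eq_mulEnergy, mulEnergy_Icc_eq_sum_coprimePairs]
  simpa using sum_coprimePairs_max_add hN fun m => (N / m) ^ 2

/-- `∑_{n=1}^{N²} τ_N(n)² = (12/π²) N² log N + O(N²)` as `N → ∞`. -/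
theorem sum_tauN_sq :
    (fun N : ℕ =>
        (∑ n ∈ Finset.Icc 1 (N ^ 2), (tauN N n : ℝ) ^ 2) -
          12 / Real.pi ^ 2 * (N : ℝ) ^ 2 * Real.log N)
      =O[atTop] fun N : ℕ => (N : ℝ) ^ 2 := by
  set P : ℕ → ℝ := fun N => ∑ m ∈ Icc 1 N, (m.totient : ℝ) / m ^ 2
  set A : ℕ → ℝ := fun N => ∑ m ∈ Icc 1 N, (m.totient : ℝ) * ((N / m : ℕ) : ℝ) ^ 2
  have h_floor : (fun N : ℕ => A N - N ^ 2 * P N) =O[atTop] fun N : ℕ => (N : ℝ) ^ 2 :=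
    .of_bound 2 <| .of_forall fun N => by
      simpa [abs_of_nonneg] using abs_sum_totient_mul_div_sq_sub_le N
  have h_log : (fun N : ℕ => P N - 6 / π ^ 2 * Real.log N) =O[atTop] fun _ => (1 : ℝ) :=
    .of_bound _ <| (eventually_ne_atTop 0).mono fun N hN => by
      simpa using abs_sum_totient_div_sq_sub_log_le hN
  have h_identity : ∀ᶠ N : ℕ in atTop,
      2 * (A N - N ^ 2 * P N) + 2 * ((P N - 6 / π ^ 2 * Real.log N) * N ^ 2) - N ^ 2 =
        (∑ n ∈ Icc 1 (N ^ 2), (tauN N n : ℝ) ^ 2) - 12 / π ^ 2 * N ^ 2 * Real.log N := by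
    filter_upwards [eventually_ge_atTop 1] with N hN
    have h : ∑ n ∈ Icc 1 (N ^ 2), (tauN N n : ℝ) ^ 2 + N ^ 2 = 2 * A N := by
      simp only [A]
      exact_mod_cast sum_sq_tauN_add_sq hN
    linear_combination -h
  refine (((h_floor.const_mul_left 2).add ?_).sub (isBigO_refl _ _)).congr' h_identity .rfl
  simpa using ((h_log.mul (isBigO_refl (fun N : ℕ => (N : ℝ) ^ 2) _)).const_mul_left 2)
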